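/- arXiv:0904.1549 — 3 statements merged into one kernel-verified Lean document; each statement's English description precedes it below -/
import Mathlib

section
/- Jordan's lemma: Let E be a finite-dimensional complex inner product space and let P and Q be two orthogonal projections on E. Then there exists a finite family of nonzero, pairwise orthogonal submodules S₁, …, S_t of E whose (internal orthogonal direct) sum is all of E, such that each S_i has dimension at most 2, each S_i is invariant under both P and Q (i.e., P maps S_i into S_i and Q maps S_i into S_i), and on each two-dimensional S_i the restrictions of P and Q are each projections of rank at most one. -/
/-!
If `v` is an eigenvector of `P + Q`, say `P v + Q v = μ v`, then `span {v, P v} = span {v, Q v}`.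
Since `P` and `Q` are idempotent, this plane is invariant under both and is mapped by them onto
the lines through `P v` and `Q v`. As `P` and `Q` are self-adjoint, the orthogonal complement of
such a block inside a jointly invariant subspace is again jointly invariant, so the blocks can be
split off one at a time.
-/

open scoped InnerProductSpace
open Module Submodule

section Span

variable {K V : Type*} [DivisionRing K] [AddCommGroup V] [Module K V]

theorem finrank_span_singleton_le_one (v : V) : finrank K (K ∙ v) ≤ 1 := by
  simpa using finrank_span_le_card (R := K) ({v} : Set V)

theorem finrank_span_pair_le_two (v w : V) : finrank K (span K {v, w}) ≤ 2 := by
  rw [span_insert]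
  exact (finrank_add_le_finrank_add_finrank _ _).trans
    (add_le_add (finrank_span_singleton_le_one v) (finrank_span_singleton_le_one w))

end Span

namespace Module.End

theorem exists_eigenvector_mem_of_mem_invtSubmodule {K V : Type*} [Field K] [IsAlgClosed K]
    [AddCommGroup V] [Module K V] [FiniteDimensional K V] {f : End K V} {W : Submodule K V}
    (hW : W ∈ f.invtSubmodule) (hW0 : W ≠ ⊥) : ∃ v ∈ W, v ≠ 0 ∧ ∃ μ : K, f v = μ • v := by
  have := nontrivial_iff_ne_bot.2 hW0
  obtain ⟨μ, hμ⟩ := exists_eigenvalue (f.restrict hW)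
  obtain ⟨⟨v, hvW⟩, hv⟩ := hμ.exists_hasEigenvector
  exact ⟨v, hvW, by simpa using hv.2, μ, congr_arg Subtype.val hv.apply_eq_smul⟩

section Idempotent

variable {R M : Type*} [CommRing R] [AddCommGroup M] [Module R M] {P Q : End R M}

theorem map_span_pair_apply_of_isIdempotentElem (hP : IsIdempotentElem P) (v : M) :
    (span R {v, P v}).map P = R ∙ P v := by
  rw [map_span, Set.image_pair, ← Module.End.mul_apply, hP.eq, Set.pair_eq_singleton]

theorem span_pair_apply_eq_of_add_apply_eq_smul {v : M} {μ : R} (h : P v + Q v = μ • v) :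
    span R {v, P v} = span R {v, Q v} := by
  have le_of_eq_smul_sub {w w' : M} (hw' : w' = μ • v - w) : span R {v, w'} ≤ span R {v, w} := by
    rw [span_le, Set.insert_subset_iff, Set.singleton_subset_iff, hw']
    exact ⟨subset_span (by simp),
      sub_mem (smul_mem _ _ (subset_span (by simp))) (subset_span (by simp))⟩
  exact le_antisymm (le_of_eq_smul_sub (eq_sub_of_add_eq h))
    (le_of_eq_smul_sub (eq_sub_of_add_eq' h))

end Idempotent

theorem exists_le_invtSubmodule_finrank_le_two_of_isIdempotentElem {K V : Type*} [Field K]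
    [IsAlgClosed K] [AddCommGroup V] [Module K V] [FiniteDimensional K V] {P Q : End K V}
    (hP : IsIdempotentElem P) (hQ : IsIdempotentElem Q) {W : Submodule K V}
    (hWP : W ∈ P.invtSubmodule) (hWQ : W ∈ Q.invtSubmodule) (hW0 : W ≠ ⊥) :
    ∃ S ≤ W, S ≠ ⊥ ∧ S ∈ P.invtSubmodule ∧ S ∈ Q.invtSubmodule ∧
      finrank K S ≤ 2 ∧ finrank K (S.map P) ≤ 1 ∧ finrank K (S.map Q) ≤ 1 := by
  obtain ⟨v, hvW, hv0, μ, hv⟩ := exists_eigenvector_mem_of_mem_invtSubmodule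
    (invtSubmodule_inf_invtSubmodule_le_invtSubmodule_add P Q ⟨hWP, hWQ⟩) hW0
  have hSQ : span K {v, P v} = span K {v, Q v} := span_pair_apply_eq_of_add_apply_eq_smul hv
  have hmapP := map_span_pair_apply_of_isIdempotentElem hP v
  have hmapQ : (span K {v, P v}).map Q = K ∙ Q v := by
    rw [hSQ, map_span_pair_apply_of_isIdempotentElem hQ]
  refine ⟨span K {v, P v}, span_le.2 (Set.pair_subset hvW (hWP hvW)),
    fun h ↦ hv0 (span_eq_bot.1 h v (by simp)), ?_, ?_, finrank_span_pair_le_two v (P v),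
    hmapP ▸ finrank_span_singleton_le_one (P v), hmapQ ▸ finrank_span_singleton_le_one (Q v)⟩
  · rw [mem_invtSubmodule_iff_map_le, hmapP, span_singleton_le_iff_mem]
    exact subset_span (by simp)
  · rw [mem_invtSubmodule_iff_map_le, hmapQ, span_singleton_le_iff_mem, hSQ]
    exact subset_span (by simp)

end Module.End

section Decomposition

variable {𝕜 E : Type*} [RCLike 𝕜] [NormedAddCommGroup E] [InnerProductSpace 𝕜 E]
  [FiniteDimensional 𝕜 E] {A : Set (Module.End 𝕜 E)} {G : Submodule 𝕜 E → Prop}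

theorem exists_finset_orthogonal_invariant_decomposition (hA : ∀ T ∈ A, T.IsSymmetric)
    (hG : ∀ W : Submodule 𝕜 E, W ≠ ⊥ → (∀ T ∈ A, W ∈ T.invtSubmodule) →
      ∃ S ≤ W, S ≠ ⊥ ∧ (∀ T ∈ A, S ∈ T.invtSubmodule) ∧ G S)
    (W : Submodule 𝕜 E) (hW : ∀ T ∈ A, W ∈ T.invtSubmodule) :
    ∃ s : Finset (Submodule 𝕜 E), (s : Set (Submodule 𝕜 E)).Pairwise IsOrtho ∧ s.sup id = W ∧
      ∀ S ∈ s, S ≠ ⊥ ∧ (∀ T ∈ A, S ∈ T.invtSubmodule) ∧ G S := by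
  induction h : finrank 𝕜 W using Nat.strong_induction_on generalizing W with
  | _ n ih =>
  obtain rfl | hW0 := eq_or_ne W ⊥
  · exact ⟨∅, by simp, by simp, by simp⟩
  obtain ⟨S, hSW, hS0, hSA, hGS⟩ := hG W hW0 hW
  have hW'A : ∀ T ∈ A, Sᗮ ⊓ W ∈ T.invtSubmodule := fun T hT ↦ Module.End.invtSubmodule.inf_mem
    ((hA T hT).orthogonalComplement_mem_invtSubmodule (hSA T hT)) (hW T hT)
  have hW'W : Sᗮ ⊓ W < W := by
    refine inf_le_right.lt_of_ne fun h ↦ hS0 ?_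
    rw [← le_bot_iff, ← S.inf_orthogonal_eq_bot]
    exact le_inf le_rfl (h ▸ hSW |>.trans inf_le_left)
  obtain ⟨s, hs_ortho, hs_sup, hs⟩ :=
    ih _ (h ▸ finrank_lt_finrank_of_lt hW'W) (Sᗮ ⊓ W) hW'A rfl
  have hSs : ∀ U ∈ s, S ⟂ U := fun U hU ↦ (isOrtho_iff_le.2 <|
    (Finset.le_sup (f := id) hU).trans (hs_sup ▸ inf_le_left)).symm
  refine ⟨insert S s, ?_, ?_, ?_⟩
  · rw [Finset.coe_insert]
    exact hs_ortho.insert fun U hU _ ↦ ⟨hSs U hU, (hSs U hU).symm⟩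
  · rw [Finset.sup_insert, hs_sup]
    exact sup_orthogonal_inf_of_hasOrthogonalProjection hSW
  · exact Finset.forall_mem_insert _ _ _ |>.2 ⟨⟨hS0, hSA, hGS⟩, hs⟩

theorem exists_orthogonal_invariant_decomposition (hA : ∀ T ∈ A, T.IsSymmetric)
    (hG : ∀ W : Submodule 𝕜 E, W ≠ ⊥ → (∀ T ∈ A, W ∈ T.invtSubmodule) →
      ∃ S ≤ W, S ≠ ⊥ ∧ (∀ T ∈ A, S ∈ T.invtSubmodule) ∧ G S) :
    ∃ (t : ℕ) (S : Fin t → Submodule 𝕜 E), Pairwise (fun i j ↦ S i ⟂ S j) ∧ ⨆ i, S i = ⊤ ∧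
      ∀ i, S i ≠ ⊥ ∧ (∀ T ∈ A, S i ∈ T.invtSubmodule) ∧ G (S i) := by
  obtain ⟨s, hs_ortho, hs_sup, hs⟩ := exists_finset_orthogonal_invariant_decomposition hA hG ⊤
    fun T _ ↦ Module.End.invtSubmodule.top_mem T
  let e := s.equivFin.symm
  have hsup : ⨆ i, (e i : Submodule 𝕜 E) = ⊤ := by
    rw [e.iSup_comp (g := Subtype.val), iSup_subtype, ← hs_sup, Finset.sup_eq_iSup]
    rfl
  exact ⟨s.card, fun i ↦ e i, fun i j hij ↦ hs_ortho (e i).2 (e j).2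
    (Subtype.val_injective.ne (e.injective.ne hij)), hsup, fun i ↦ hs _ (e i).2⟩

end Decomposition

/-- Jordan's lemma: given two orthogonal projections `P` and `Q` on a
finite-dimensional complex inner product space `E`, the space decomposes into
nonzero, pairwise orthogonal subspaces of dimension at most 2, each invariant
under both `P` and `Q`, on which (in the two-dimensional case) the restrictions
of `P` and `Q` are projections of rank at most one. -/
theorem jordan_lemma (E : Type*) [NormedAddCommGroup E] [InnerProductSpace ℂ E]
    [FiniteDimensional ℂ E]
    (P Q : E →ₗ[ℂ] E)
    (hP2 : P ∘ₗ P = P) (hPsa : ∀ x y : E, ⟪P x, y⟫_ℂ = ⟪x, P y⟫_ℂ)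
    (hQ2 : Q ∘ₗ Q = Q) (hQsa : ∀ x y : E, ⟪Q x, y⟫_ℂ = ⟪x, Q y⟫_ℂ) :
    ∃ (t : ℕ) (S : Fin t → Submodule ℂ E),
      (∀ i, S i ≠ ⊥) ∧
      (∀ i j, i ≠ j → ∀ x ∈ S i, ∀ y ∈ S j, ⟪x, y⟫_ℂ = 0) ∧
      (⨆ i, S i) = ⊤ ∧
      (∀ i, Module.finrank ℂ (S i) ≤ 2) ∧
      (∀ i, ∀ x ∈ S i, P x ∈ S i) ∧
      (∀ i, ∀ x ∈ S i, Q x ∈ S i) ∧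
      (∀ i, Module.finrank ℂ (S i) = 2 →
        Module.finrank ℂ ((S i).map P) ≤ 1 ∧
        Module.finrank ℂ ((S i).map Q) ≤ 1) := by
  have hsymm : ∀ T ∈ ({P, Q} : Set (Module.End ℂ E)), T.IsSymmetric := by
    rintro T (rfl | rfl)
    exacts [hPsa, hQsa]
  obtain ⟨t, S, hortho, hsup, hS⟩ := exists_orthogonal_invariant_decomposition hsymm
    (G := fun S ↦ finrank ℂ S ≤ 2 ∧ finrank ℂ (S.map P) ≤ 1 ∧ finrank ℂ (S.map Q) ≤ 1)
    fun W hW0 hW ↦ by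
      obtain ⟨S, hSW, hS0, hSP, hSQ, hG⟩ :=
        Module.End.exists_le_invtSubmodule_finrank_le_two_of_isIdempotentElem hP2 hQ2
          (hW P (by simp)) (hW Q (by simp)) hW0
      exact ⟨S, hSW, hS0, by rintro T (rfl | rfl) <;> assumption, hG⟩
  exact ⟨t, S, fun i ↦ (hS i).1, fun i j hij ↦ isOrtho_iff_inner_eq.1 (hortho hij), hsup,
    fun i ↦ (hS i).2.2.1, fun i _ hx ↦ (hS i).2.1 P (by simp) hx,
    fun i _ hx ↦ (hS i).2.1 Q (by simp) hx, fun i _ ↦ (hS i).2.2.2⟩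
end

section
/- Product of two reflections (full decomposition form): Let E be a finite-dimensional complex inner product space, let P and Q be orthogonal projections on E, let F₀ = 2P − id and F₁ = 2Q − id be the reflections about their supports, and let W = F₁ ∘ F₀. Then there exists a finite family of nonzero, pairwise orthogonal submodules of E whose sum is all of E, each invariant under W, such that each submodule either (i) is one-dimensional and W acts on it as multiplication by 1 or by −1, or (ii) is two-dimensional and there exists θ ∈ (0, π/2) such that the restriction of W to it has eigenvalues exp(2iθ) and exp(−2iθ). -/
open scoped InnerProductSpace

/-!
`W = F₁ F₀` is a product of two self-adjoint involutions, so it is unitary and `F₀` conjugates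
it to its inverse: if `W v = λ v` then `W (F₀ v) = λ⁻¹ F₀ v = conj λ • F₀ v`. Hence for an
eigenvector `v` of `W`, the span of `v` and `F₀ v` is invariant under `F₀` and `W`, and so under
`F₁ = W F₀`. If `λ` is not real this span is a plane on which `W` has the eigenvalues
`λ = exp (2iθ)` and `conj λ`; if `λ = ±1`, the `λ`-eigenspace is `F₀`-invariant and contains
a line on which `F₀` is `±1`. Either way we get a block invariant under both reflections; they
are self-adjoint, so its orthogonal complement is invariant too, and we conclude by induction on
the dimension.
-/

open scoped ComplexConjugate
open Module Module.End Submodule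

section Involution

variable {R M : Type*}

theorem Submodule.span_mem_invtSubmodule [Semiring R] [AddCommMonoid M] [Module R M]
    {T : Module.End R M} {s : Set M} (h : ∀ x ∈ s, T x ∈ span R s) :
    span R s ∈ T.invtSubmodule :=
  span_le.mpr h

theorem Module.End.mem_invtSubmodule_of_comp [Semiring R] [AddCommMonoid M] [Module R M]
    {F₀ F₁ : Module.End R M} (h₀ : Function.Involutive F₀) {p : Submodule R M}
    (hp₀ : p ∈ F₀.invtSubmodule) (hp : p ∈ invtSubmodule (F₁ ∘ₗ F₀)) :
    p ∈ F₁.invtSubmodule := fun x hx => by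
  simpa [h₀ x] using hp (hp₀ hx)

theorem exists_ne_zero_apply_eq_or_apply_eq_neg [Ring R] [AddCommGroup M] [Module R M]
    {F : Module.End R M} (hF : Function.Involutive F) {p : Submodule R M}
    (hp : p ∈ F.invtSubmodule) (hp₀ : p ≠ ⊥) : ∃ u ∈ p, u ≠ 0 ∧ (F u = u ∨ F u = -u) := by
  obtain ⟨v, hvp, hv⟩ := p.ne_bot_iff.mp hp₀
  by_cases h : v + F v = 0
  · exact ⟨v, hvp, hv, Or.inr (eq_neg_of_add_eq_zero_right h)⟩
  · exact ⟨v + F v, p.add_mem hvp (hp hvp), h, Or.inl (by rw [map_add, hF v, add_comm])⟩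

theorem IsIdempotentElem.involutive_two_smul_sub_id [CommRing R] [AddCommGroup M] [Module R M]
    {P : M →ₗ[R] M} (hP : IsIdempotentElem P) :
    Function.Involutive ⇑((2 : R) • P - LinearMap.id : M →ₗ[R] M) := by
  intro x
  have hPx : P (P x) = P x := LinearMap.congr_fun hP x
  simp only [LinearMap.sub_apply, LinearMap.smul_apply, LinearMap.id_apply, map_sub, map_smul,
    hPx]
  module

end Involution

section Symmetric

variable {𝕜 E : Type*} [RCLike 𝕜] [NormedAddCommGroup E] [InnerProductSpace 𝕜 E]

theorem LinearMap.IsSymmetric.two_smul_sub_id {P : E →ₗ[𝕜] E} (hP : P.IsSymmetric) :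
    ((2 : 𝕜) • P - LinearMap.id).IsSymmetric :=
  (hP.smul (RCLike.conj_ofNat 2)).sub fun _ _ => rfl

theorem LinearMap.IsSymmetric.norm_map_of_involutive {F : E →ₗ[𝕜] E} (hF : F.IsSymmetric)
    (hinv : Function.Involutive F) (x : E) : ‖F x‖ = ‖x‖ :=
  (F.isometryOfInner fun x y => by rw [hF, hinv]).norm_map x

end Symmetric

section ProductOfInvolutions

variable {k V : Type*} [Field k] [AddCommGroup V] [Module k V] {F₀ F₁ : Module.End k V}

theorem apply_mem_eigenspace_inv (h₀ : Function.Involutive F₀) (h₁ : Function.Involutive F₁)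
    {l : k} {v : V} (hv : v ∈ eigenspace (F₁ ∘ₗ F₀) l) :
    F₀ v ∈ eigenspace (F₁ ∘ₗ F₀) l⁻¹ := by
  rw [mem_eigenspace_iff] at hv ⊢
  rw [LinearMap.comp_apply, h₀ v]
  have hF₀v : F₀ v = l • F₁ v := by rw [← map_smul, ← hv, LinearMap.comp_apply, h₁]
  rcases eq_or_ne l 0 with rfl | hl
  · have hv₀ : v = 0 := by rw [← h₀ v, hF₀v, zero_smul, map_zero]
    simp [hv₀]
  · rw [hF₀v, inv_smul_smul₀ hl]

theorem eigenspace_mem_invtSubmodule_of_inv_eq (h₀ : Function.Involutive F₀)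
    (h₁ : Function.Involutive F₁) {l : k} (hl : l⁻¹ = l) :
    eigenspace (F₁ ∘ₗ F₀) l ∈ F₀.invtSubmodule := fun _ hv =>
  hl ▸ apply_mem_eigenspace_inv h₀ h₁ hv

end ProductOfInvolutions

section Block

open Complex

theorem Complex.eq_one_or_eq_neg_one_of_norm_eq_one {l : ℂ} (hl : ‖l‖ = 1) (him : l.im = 0) :
    l = 1 ∨ l = -1 := by
  refine mul_self_eq_one_iff.mp ?_
  calc l * l = l * conj l := by rw [conj_eq_iff_im.mpr him]
    _ = 1 := by rw [mul_conj, normSq_eq_norm_sq, hl]; norm_num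

theorem Complex.exists_angle_of_norm_eq_one {l : ℂ} (hl : ‖l‖ = 1) (him : 0 < l.im) :
    ∃ θ ∈ Set.Ioo 0 (Real.pi / 2), exp (2 * θ * I) = l ∧ exp (-(2 * θ * I)) = conj l := by
  have harg : exp (arg l * I) = l := by simpa [hl] using norm_mul_exp_arg_mul_I l
  have hexp : exp (2 * ((arg l / 2 : ℝ) : ℂ) * I) = l := by
    conv_rhs => rw [← harg]
    congr 1; push_cast; ring
  refine ⟨arg l / 2, ⟨?_, ?_⟩, hexp, by rw [exp_neg, hexp, inv_eq_conj hl]⟩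
  · have harg₀ : arg l ≠ 0 := fun h => him.ne' (arg_eq_zero_iff.mp h).2
    linarith [(arg_nonneg_iff.mpr him.le).lt_of_ne' harg₀]
  · linarith [arg_lt_pi_iff.mpr (Or.inr him.ne')]

variable {E : Type*} [AddCommGroup E] [Module ℂ E]

def IsReflectionBlock (W : Module.End ℂ E) (L : Submodule ℂ E) : Prop :=
  (finrank ℂ L = 1 ∧ ((∀ x ∈ L, W x = x) ∨ (∀ x ∈ L, W x = -x))) ∨
  (finrank ℂ L = 2 ∧ ∃ θ : ℝ, θ ∈ Set.Ioo 0 (Real.pi / 2) ∧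
      (∃ x ∈ L, x ≠ 0 ∧ W x = exp (2 * θ * I) • x) ∧
      (∃ x ∈ L, x ≠ 0 ∧ W x = exp (-(2 * θ * I)) • x))

variable {W : Module.End ℂ E}

theorem IsReflectionBlock.ne_bot {L : Submodule ℂ E} (h : IsReflectionBlock W L) : L ≠ ⊥ := by
  rintro rfl
  rcases h with ⟨h, -⟩ | ⟨h, -⟩ <;> simp at h

theorem isReflectionBlock_span_singleton {l : ℂ} {u : E} (hu : u ≠ 0) (hWu : W u = l • u)
    (hl : l = 1 ∨ l = -1) : IsReflectionBlock W (ℂ ∙ u) := by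
  have hle : ℂ ∙ u ≤ eigenspace W l :=
    (span_singleton_le_iff_mem _ _).mpr (mem_eigenspace_iff.mpr hWu)
  have hW : ∀ x ∈ ℂ ∙ u, W x = l • x := fun x hx => mem_eigenspace_iff.mp (hle hx)
  refine Or.inl ⟨finrank_span_singleton hu, ?_⟩
  rcases hl with rfl | rfl
  · exact Or.inl fun x hx => by rw [hW x hx, one_smul]
  · exact Or.inr fun x hx => by rw [hW x hx, neg_one_smul]

theorem isReflectionBlock_span_pair {l : ℂ} (hl : ‖l‖ = 1) (him : l.im ≠ 0) {v w : E}
    (hv : W.HasEigenvector l v) (hw : W.HasEigenvector (conj l) w) :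
    IsReflectionBlock W (span ℂ {v, w}) := by
  wlog hpos : 0 < l.im generalizing l v w
  · rw [Set.pair_comm]
    exact this (by simpa using hl) (by simpa using him) hw (by simpa using hv)
      (by simpa using lt_of_le_of_ne (not_lt.mp hpos) him)
  have hne : l ≠ conj l := fun h => him (conj_eq_iff_im.mp h.symm)
  have hindep : LinearIndependent ℂ ![v, w] := by
    refine W.eigenvectors_linearIndependent' ![l, conj l] ?_ _
      (Fin.forall_fin_two.mpr ⟨hv, hw⟩)
    intro i j hij
    fin_cases i <;> fin_cases j <;> simp_all [hne.symm]
  have hrank : finrank ℂ (span ℂ {v, w}) = 2 := by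
    rw [← Matrix.range_cons_cons_empty v w ![], finrank_span_eq_card hindep, Fintype.card_fin]
  obtain ⟨θ, hθ, hexp, hexp_neg⟩ := exists_angle_of_norm_eq_one hl hpos
  refine Or.inr ⟨hrank, θ, hθ, ⟨v, subset_span (by simp), hv.2, ?_⟩,
    ⟨w, subset_span (by simp), hw.2, ?_⟩⟩
  · rw [hexp, hv.apply_eq_smul]
  · rw [hexp_neg, hw.apply_eq_smul]

end Block

section Decomposition

variable {E : Type*} [NormedAddCommGroup E] [InnerProductSpace ℂ E]

structure IsBlockDecomposition (W : Module.End ℂ E) (K : Submodule ℂ E) {t : ℕ}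
    (S : Fin t → Submodule ℂ E) : Prop where
  pairwise_isOrtho : Pairwise fun i j => S i ⟂ S j
  iSup_eq : ⨆ i, S i = K
  mem_invtSubmodule : ∀ i, S i ∈ W.invtSubmodule
  isReflectionBlock : ∀ i, IsReflectionBlock W (S i)

variable {W : Module.End ℂ E}

theorem isBlockDecomposition_bot (W : Module.End ℂ E) :
    IsBlockDecomposition W ⊥ (Fin.elim0 : Fin 0 → Submodule ℂ E) where
  pairwise_isOrtho i := i.elim0
  iSup_eq := iSup_of_empty _
  mem_invtSubmodule i := i.elim0
  isReflectionBlock i := i.elim0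

theorem IsBlockDecomposition.cons {K L : Submodule ℂ E} {t : ℕ} {S : Fin t → Submodule ℂ E}
    (h : IsBlockDecomposition W K S) (hLW : L ∈ W.invtSubmodule) (hL : IsReflectionBlock W L)
    (hKL : K ≤ Lᗮ) : IsBlockDecomposition W (L ⊔ K) (Fin.cons L S : Fin (t + 1) → _) where
  pairwise_isOrtho := by
    have hLS (j : Fin t) : L ⟂ S j :=
      (isOrtho_iff_le.mpr ((h.iSup_eq ▸ le_iSup S j).trans hKL)).symm
    intro i j hij
    cases i using Fin.cases with
    | zero => cases j using Fin.cases with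
      | zero => exact absurd rfl hij
      | succ j => exact hLS j
    | succ i => cases j using Fin.cases with
      | zero => exact (hLS i).symm
      | succ j => exact h.pairwise_isOrtho (by simpa [Fin.ext_iff] using hij)
  iSup_eq := by
    have hSK (j : Fin t) : S j ≤ K := h.iSup_eq ▸ le_iSup S j
    refine le_antisymm (iSup_le (Fin.cases le_sup_left fun j => le_sup_of_le_right (hSK j))) ?_
    exact sup_le (le_iSup_of_le 0 le_rfl)
      (h.iSup_eq ▸ iSup_le fun j => le_iSup_of_le j.succ le_rfl)
  mem_invtSubmodule := Fin.cases hLW h.mem_invtSubmodule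
  isReflectionBlock := Fin.cases hL h.isReflectionBlock

end Decomposition

section TwoReflections

variable {E : Type*} [NormedAddCommGroup E] [InnerProductSpace ℂ E] {F₀ F₁ : Module.End ℂ E}
  (hs₀ : F₀.IsSymmetric) (h₀ : Function.Involutive F₀)
  (hs₁ : F₁.IsSymmetric) (h₁ : Function.Involutive F₁)
include hs₀ h₀ hs₁ h₁

theorem norm_eq_one_of_hasEigenvector {l : ℂ} {v : E} (hv : HasEigenvector (F₁ ∘ₗ F₀) l v) :
    ‖l‖ = 1 := by
  have h := hs₁.norm_map_of_involutive h₁ (F₀ v)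
  rw [hs₀.norm_map_of_involutive h₀, ← LinearMap.comp_apply, hv.apply_eq_smul, norm_smul] at h
  exact (mul_eq_right₀ (norm_ne_zero_iff.mpr hv.2)).mp h

theorem exists_isReflectionBlock_le_of_hasEigenvector {K : Submodule ℂ E}
    (hK₀ : K ∈ F₀.invtSubmodule) {l : ℂ} {v : E} (hvK : v ∈ K)
    (hv : HasEigenvector (F₁ ∘ₗ F₀) l v) :
    ∃ L ≤ K, L ∈ F₀.invtSubmodule ∧ L ∈ invtSubmodule (F₁ ∘ₗ F₀) ∧
      IsReflectionBlock (F₁ ∘ₗ F₀) L := by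
  have hl : ‖l‖ = 1 := norm_eq_one_of_hasEigenvector hs₀ h₀ hs₁ h₁ hv
  by_cases him : l.im = 0
  · have hp : eigenspace (F₁ ∘ₗ F₀) l ⊓ K ∈ F₀.invtSubmodule := invtSubmodule.inf_mem
      (eigenspace_mem_invtSubmodule_of_inv_eq h₀ h₁
        ((Complex.inv_eq_conj hl).trans (Complex.conj_eq_iff_im.mpr him))) hK₀
    obtain ⟨u, ⟨huW, huK⟩, hu, hF₀u⟩ := exists_ne_zero_apply_eq_or_apply_eq_neg h₀ hp
      ((Submodule.ne_bot_iff _).mpr ⟨v, ⟨hv.1, hvK⟩, hv.2⟩)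
    have hWu : F₁ (F₀ u) = l • u := mem_eigenspace_iff.mp huW
    refine ⟨ℂ ∙ u, (span_singleton_le_iff_mem _ _).mpr huK, ?_, ?_,
      isReflectionBlock_span_singleton hu hWu
        (Complex.eq_one_or_eq_neg_one_of_norm_eq_one hl him)⟩
    · exact span_mem_invtSubmodule
        (by rcases hF₀u with h | h <;> simp [h, mem_span_singleton_self])
    · exact span_mem_invtSubmodule (by simp [hWu, smul_mem, mem_span_singleton_self])
  · have hw : HasEigenvector (F₁ ∘ₗ F₀) (conj l) (F₀ v) :=
      ⟨Complex.inv_eq_conj hl ▸ apply_mem_eigenspace_inv h₀ h₁ hv.1,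
        (map_ne_zero_iff _ h₀.injective).mpr hv.2⟩
    have hvL : v ∈ span ℂ {v, F₀ v} := subset_span (by simp)
    have hwL : F₀ v ∈ span ℂ {v, F₀ v} := subset_span (by simp)
    refine ⟨span ℂ {v, F₀ v}, span_le.mpr (Set.insert_subset hvK (by simpa using hK₀ hvK)),
      ?_, ?_, isReflectionBlock_span_pair hl him hv hw⟩
    · exact span_mem_invtSubmodule (by simp [h₀ v, hvL, hwL])
    · have hWv : F₁ (F₀ v) = l • v := hv.apply_eq_smul
      have hWw : F₁ (F₀ (F₀ v)) = conj l • F₀ v := hw.apply_eq_smul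
      exact span_mem_invtSubmodule (by simp [hWv, hWw, smul_mem, hvL, hwL])

theorem exists_isReflectionBlock_le {K : Submodule ℂ E} [FiniteDimensional ℂ K]
    (hK : K ≠ ⊥) (hK₀ : K ∈ F₀.invtSubmodule) (hK₁ : K ∈ F₁.invtSubmodule) :
    ∃ L ≤ K, L ∈ F₀.invtSubmodule ∧ L ∈ invtSubmodule (F₁ ∘ₗ F₀) ∧
      IsReflectionBlock (F₁ ∘ₗ F₀) L := by
  have hKW : K ∈ invtSubmodule (F₁ ∘ₗ F₀) := invtSubmodule.comp _ hK₁ hK₀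
  have : Nontrivial K := nontrivial_iff_ne_bot.mpr hK
  obtain ⟨l, hl⟩ := exists_eigenvalue ((F₁ ∘ₗ F₀).restrict hKW)
  obtain ⟨⟨v, hvK⟩, hv⟩ := hl.exists_hasEigenvector
  exact exists_isReflectionBlock_le_of_hasEigenvector hs₀ h₀ hs₁ h₁ hK₀ hvK
    ⟨mem_eigenspace_iff.mpr (congrArg Subtype.val hv.apply_eq_smul),
      fun h => hv.2 (Subtype.ext h)⟩

theorem exists_isBlockDecomposition [FiniteDimensional ℂ E] (K : Submodule ℂ E)
    (hK₀ : K ∈ F₀.invtSubmodule) (hK₁ : K ∈ F₁.invtSubmodule) :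
    ∃ (t : ℕ) (S : Fin t → Submodule ℂ E), IsBlockDecomposition (F₁ ∘ₗ F₀) K S := by
  induction hn : finrank ℂ K using Nat.strong_induction_on generalizing K with
  | _ n ih =>
  rcases eq_or_ne K ⊥ with rfl | hK
  · exact ⟨0, _, isBlockDecomposition_bot _⟩
  obtain ⟨L, hLK, hL₀, hLW, hL⟩ := exists_isReflectionBlock_le hs₀ h₀ hs₁ h₁ hK hK₀ hK₁
  have hL₁ : L ∈ F₁.invtSubmodule := mem_invtSubmodule_of_comp h₀ hL₀ hLW
  have hrank := finrank_add_inf_finrank_orthogonal hLK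
  have hLpos : 1 ≤ finrank ℂ L := one_le_finrank_iff.mpr hL.ne_bot
  obtain ⟨t, S, hS⟩ := ih _ (by omega) (Lᗮ ⊓ K)
    (invtSubmodule.inf_mem (hs₀.orthogonalComplement_mem_invtSubmodule hL₀) hK₀)
    (invtSubmodule.inf_mem (hs₁.orthogonalComplement_mem_invtSubmodule hL₁) hK₁) rfl
  refine ⟨t + 1, Fin.cons L S, ?_⟩
  rw [← sup_orthogonal_inf_of_hasOrthogonalProjection hLK]
  exact hS.cons hLW hL inf_le_left

end TwoReflections

/-- Product of two reflections (full decomposition form): for two orthogonal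
projections `P`, `Q` on a finite-dimensional complex inner product space, with
reflections `F₀ = 2P - id`, `F₁ = 2Q - id` and `W = F₁ ∘ F₀`, the space
decomposes into nonzero pairwise orthogonal `W`-invariant subspaces, each of
which is either one-dimensional with `W` acting as `±1`, or two-dimensional
with `W` having eigenvalues `exp(±2iθ)` for some `θ ∈ (0, π/2)`. -/
theorem product_of_two_reflections_decomposition
    (E : Type*) [NormedAddCommGroup E] [InnerProductSpace ℂ E]
    [FiniteDimensional ℂ E]
    (P Q : E →ₗ[ℂ] E)
    (hP2 : P ∘ₗ P = P) (hPsa : ∀ x y : E, ⟪P x, y⟫_ℂ = ⟪x, P y⟫_ℂ)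
    (hQ2 : Q ∘ₗ Q = Q) (hQsa : ∀ x y : E, ⟪Q x, y⟫_ℂ = ⟪x, Q y⟫_ℂ)
    (F₀ F₁ W : E →ₗ[ℂ] E)
    (hF₀ : F₀ = (2 : ℂ) • P - LinearMap.id)
    (hF₁ : F₁ = (2 : ℂ) • Q - LinearMap.id)
    (hW : W = F₁ ∘ₗ F₀) :
    ∃ (t : ℕ) (S : Fin t → Submodule ℂ E),
      (∀ i, S i ≠ ⊥) ∧
      (∀ i j, i ≠ j → ∀ x ∈ S i, ∀ y ∈ S j, ⟪x, y⟫_ℂ = 0) ∧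
      (⨆ i, S i) = ⊤ ∧
      (∀ i, ∀ x ∈ S i, W x ∈ S i) ∧
      (∀ i,
        (Module.finrank ℂ (S i) = 1 ∧
          ((∀ x ∈ S i, W x = x) ∨ (∀ x ∈ S i, W x = -x))) ∨
        (Module.finrank ℂ (S i) = 2 ∧
          ∃ θ : ℝ, θ ∈ Set.Ioo 0 (Real.pi / 2) ∧
            (∃ x ∈ S i, x ≠ 0 ∧ W x = Complex.exp (2 * θ * Complex.I) • x) ∧
            (∃ x ∈ S i, x ≠ 0 ∧ W x = Complex.exp (-(2 * θ * Complex.I)) • x))) := by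
  subst hF₀ hF₁ hW
  obtain ⟨t, S, hS⟩ := exists_isBlockDecomposition
    (LinearMap.IsSymmetric.two_smul_sub_id hPsa) (IsIdempotentElem.involutive_two_smul_sub_id hP2)
    (LinearMap.IsSymmetric.two_smul_sub_id hQsa) (IsIdempotentElem.involutive_two_smul_sub_id hQ2)
    ⊤ (invtSubmodule.top_mem _) (invtSubmodule.top_mem _)
  exact ⟨t, S, fun i => (hS.isReflectionBlock i).ne_bot,
    fun i j hij => isOrtho_iff_inner_eq.mp (hS.pairwise_isOrtho hij), hS.iSup_eq,
    hS.mem_invtSubmodule, hS.isReflectionBlock⟩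
end

section
/- Product of two reflections in a two-dimensional subspace: Let E be a complex inner product space, let θ ∈ (0, π/2), let v and v⊥ be orthonormal vectors in E, and set w = (cos θ)·v + (sin θ)·v⊥. Let P be the orthogonal projection of E onto the span of v and Q the orthogonal projection onto the span of w, and let W = (2Q − id) ∘ (2P − id). Then W(v − i·v⊥) = exp(2iθ)·(v − i·v⊥) and W(v + i·v⊥) = exp(−2iθ)·(v + i·v⊥); in particular exp(2iθ) and exp(−2iθ) are eigenvalues of W, and v = ((v + i·v⊥) + (v − i·v⊥))/2 is an equal-weight superposition of the two corresponding eigenvectors. -/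
/-!
Write `F_u = 2 P_u - id`. On the plane spanned by the orthonormal pair `v, v⊥`, the reflection `F_v`
swaps `v - i v⊥` and `v + i v⊥`, while `F_w` maps `v + i v⊥` to `exp(2iθ) (v - i v⊥)`,
because `⟪w, v + i v⊥⟫ = exp(iθ)`. Composing gives the first eigenvector; the second is the same
computation for the pair `v, -v⊥` and the angle `-θ`, which describe the same `w`.
-/

open scoped InnerProductSpace

/-- The rank-one orthogonal projection onto the span of a unit vector `u`:
the map `x ↦ ⟪u, x⟫ • u` (inner product conjugate-linear in the first slot). -/
noncomputable def rankOneProj {E : Type*} [NormedAddCommGroup E]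
    [InnerProductSpace ℂ E] (u : E) : E →ₗ[ℂ] E where
  toFun x := ⟪u, x⟫_ℂ • u
  map_add' x y := by simp [inner_add_right, add_smul]
  map_smul' c x := by simp [inner_smul_right, smul_smul]

open Complex

section Reflection

variable {E : Type*} [NormedAddCommGroup E] [InnerProductSpace ℂ E]

noncomputable def rankOneReflection (u : E) : E →ₗ[ℂ] E :=
  (2 : ℂ) • rankOneProj u - LinearMap.id

theorem rankOneReflection_apply (u x : E) :
    rankOneReflection u x = (2 * ⟪u, x⟫_ℂ) • u - x := by
  simp [rankOneReflection, rankOneProj, mul_smul]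

theorem sub_smul_ne_zero_of_inner_eq_zero {v p : E} (hv : v ≠ 0) (horth : ⟪v, p⟫_ℂ = 0)
    (z : ℂ) : v - z • p ≠ 0 := by
  intro h
  have hinner : ⟪v, v - z • p⟫_ℂ = ⟪v, v⟫_ℂ := by
    rw [inner_sub_right, inner_smul_right, horth, mul_zero, sub_zero]
  rw [h, inner_zero_right] at hinner
  exact inner_self_ne_zero.2 hv hinner.symm

section OrthonormalPair

variable {v p : E} (hv : ‖v‖ = 1) (hp : ‖p‖ = 1) (horth : ⟪v, p⟫_ℂ = 0)
include hv horth

theorem rankOneReflection_sub_smul (z : ℂ) :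
    rankOneReflection v (v - z • p) = v + z • p := by
  rw [rankOneReflection_apply, inner_sub_right, inner_smul_right, horth,
    inner_self_eq_one_of_norm_eq_one hv]
  module

include hp

theorem rankOneReflection_cos_smul_add_sin_smul_apply (θ : ℝ) :
    rankOneReflection ((Real.cos θ : ℂ) • v + (Real.sin θ : ℂ) • p) (v + I • p) =
      exp (2 * θ * I) • (v - I • p) := by
  have hinner : ⟪(Real.cos θ : ℂ) • v + (Real.sin θ : ℂ) • p, v + I • p⟫_ℂ = exp (θ * I) := by
    simp only [inner_add_left, inner_add_right, inner_smul_left, inner_smul_right, horth,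
      inner_eq_zero_symm.1 horth, inner_self_eq_one_of_norm_eq_one hv,
      inner_self_eq_one_of_norm_eq_one hp, conj_ofReal]
    rw [exp_mul_I, ofReal_cos, ofReal_sin]
    ring
  have hsq : exp (θ * I) * exp (θ * I) = exp (2 * θ * I) := by rw [← exp_add]; ring_nf
  have hinv : exp (θ * I) * exp (-θ * I) = 1 := by rw [← exp_add]; ring_nf; exact exp_zero
  have hcos : 2 * exp (θ * I) * cos θ - 1 = exp (2 * θ * I) := by
    rw [cos]; linear_combination hsq + hinv
  have hsin : 2 * exp (θ * I) * sin θ - I = -I * exp (2 * θ * I) := by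
    rw [sin]; linear_combination I * hinv - I * hsq
  rw [rankOneReflection_apply, hinner, ofReal_cos, ofReal_sin]
  match_scalars
  · linear_combination hcos
  · linear_combination hsin

theorem rankOneReflection_comp_apply_sub_I_smul (θ : ℝ) :
    (rankOneReflection ((Real.cos θ : ℂ) • v + (Real.sin θ : ℂ) • p) ∘ₗ rankOneReflection v)
      (v - I • p) = exp (2 * θ * I) • (v - I • p) := by
  rw [LinearMap.comp_apply, rankOneReflection_sub_smul hv horth,
    rankOneReflection_cos_smul_add_sin_smul_apply hv hp horth]

end OrthonormalPair

end Reflection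

theorem product_of_two_reflections_2d_general
    (E : Type*) [NormedAddCommGroup E] [InnerProductSpace ℂ E]
    (θ : ℝ)
    (v vperp : E) (hv : ‖v‖ = 1) (hvperp : ‖vperp‖ = 1)
    (horth : ⟪v, vperp⟫_ℂ = 0)
    (w : E) (hw : w = (Real.cos θ : ℂ) • v + (Real.sin θ : ℂ) • vperp)
    (W : E →ₗ[ℂ] E)
    (hW : W = ((2 : ℂ) • rankOneProj w - LinearMap.id) ∘ₗ
              ((2 : ℂ) • rankOneProj v - LinearMap.id)) :
    W (v - Complex.I • vperp) =
        Complex.exp (2 * θ * Complex.I) • (v - Complex.I • vperp) ∧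
    W (v + Complex.I • vperp) =
        Complex.exp (-(2 * θ * Complex.I)) • (v + Complex.I • vperp) ∧
    Module.End.HasEigenvalue (W : Module.End ℂ E) (Complex.exp (2 * θ * Complex.I)) ∧
    Module.End.HasEigenvalue (W : Module.End ℂ E) (Complex.exp (-(2 * θ * Complex.I))) ∧
    v = ((2 : ℂ)⁻¹) • ((v + Complex.I • vperp) + (v - Complex.I • vperp)) := by
  have hW' : W = rankOneReflection w ∘ₗ rankOneReflection v := hW
  have horth' : ⟪v, -vperp⟫_ℂ = 0 := by rw [inner_neg_right, horth, neg_zero]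
  have hminus : W (v - I • vperp) = exp (2 * θ * I) • (v - I • vperp) := by
    rw [hW', hw]
    exact rankOneReflection_comp_apply_sub_I_smul hv hvperp horth θ
  have hplus : W (v + I • vperp) = exp (-(2 * θ * I)) • (v + I • vperp) := by
    have := rankOneReflection_comp_apply_sub_I_smul hv (by rwa [norm_neg]) horth' (-θ)
    simp only [Real.cos_neg, Real.sin_neg, ofReal_neg, neg_smul, smul_neg, neg_neg,
      sub_neg_eq_add, mul_neg, neg_mul] at this
    rwa [hW', hw]
  have hv0 : v ≠ 0 := norm_ne_zero_iff.1 (by rw [hv]; exact one_ne_zero)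
  refine ⟨hminus, hplus, ?_, ?_, by module⟩
  · exact Module.End.hasEigenvalue_of_hasEigenvector
      ⟨Module.End.mem_eigenspace_iff.2 hminus, sub_smul_ne_zero_of_inner_eq_zero hv0 horth I⟩
  · refine Module.End.hasEigenvalue_of_hasEigenvector ⟨Module.End.mem_eigenspace_iff.2 hplus, ?_⟩
    simpa using sub_smul_ne_zero_of_inner_eq_zero hv0 horth' I

/-- Product of two reflections in a two-dimensional subspace: with `v`, `v⊥`
orthonormal, `w = cos θ • v + sin θ • v⊥`, `P`, `Q` the projections onto the
spans of `v`, `w`, and `W = (2Q - id) ∘ (2P - id)`, the vectors `v ∓ i v⊥` are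
eigenvectors of `W` with eigenvalues `exp(±2iθ)`, and `v` is their
equal-weight superposition. -/
theorem product_of_two_reflections_2d
    (E : Type*) [NormedAddCommGroup E] [InnerProductSpace ℂ E]
    (θ : ℝ) (hθ : θ ∈ Set.Ioo 0 (Real.pi / 2))
    (v vperp : E) (hv : ‖v‖ = 1) (hvperp : ‖vperp‖ = 1)
    (horth : ⟪v, vperp⟫_ℂ = 0)
    (w : E) (hw : w = (Real.cos θ : ℂ) • v + (Real.sin θ : ℂ) • vperp)
    (W : E →ₗ[ℂ] E)
    (hW : W = ((2 : ℂ) • rankOneProj w - LinearMap.id) ∘ₗ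
              ((2 : ℂ) • rankOneProj v - LinearMap.id)) :
    W (v - Complex.I • vperp) =
        Complex.exp (2 * θ * Complex.I) • (v - Complex.I • vperp) ∧
    W (v + Complex.I • vperp) =
        Complex.exp (-(2 * θ * Complex.I)) • (v + Complex.I • vperp) ∧
    Module.End.HasEigenvalue (W : Module.End ℂ E) (Complex.exp (2 * θ * Complex.I)) ∧
    Module.End.HasEigenvalue (W : Module.End ℂ E) (Complex.exp (-(2 * θ * Complex.I))) ∧
    v = ((2 : ℂ)⁻¹) • ((v + Complex.I • vperp) + (v - Complex.I • vperp)) :=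
  product_of_two_reflections_2d_general E θ v vperp hv hvperp horth w hw W hW
end
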